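/- State probabilities of the multivariate GCP time-changed by the multivariate gamma subordinator: for every t > 0 and every n̄ = (n_1,…,n_q) ∈ ℕ^q, p̂(n̄,t) = (1−θ)^{λt} · Σ_{h=0}^∞ (θ^h/h!) (λt)_h · ∏_{i=1}^q ( a_i/(a_i+λ_i) )^{h+λt} · Σ_{(m_1,…,m_{k_i}) ∈ Ω(k_i,n_i)} (h+λt)_{η_i} ∏_{j=1}^{k_i} ( (λ_{ij}/(a_i+λ_i))^{m_j} / m_j! ), where η_i = m_1 + ⋯ + m_{k_i} and (x)_h denotes the rising factorial x(x+1)⋯(x+h−1) with (x)_0 = 1. -/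

import Mathlib

open scoped BigOperators
open MeasureTheory

/-- The density of the multivariate gamma subordinator at point `x` and time `t`. -/
noncomputable def mvGammaPdf (q : ℕ) (lam θ : ℝ) (a : Fin q → ℝ) (x : Fin q → ℝ) (t : ℝ) : ℝ :=
  ((1 - θ) ^ (lam * t) / Real.Gamma (lam * t)) *
    ∑' n : ℕ, (θ ^ n / ((n.factorial : ℝ) * Real.Gamma ((n : ℝ) + lam * t) ^ (q - 1))) *
      ∏ i, ((a i * x i) ^ ((n : ℝ) + lam * t) / x i * Real.exp (-(a i * x i)))

/-- `Omega k n` is the (finite) set of `(m_1, …, m_k) ∈ ℕ^k` with `Σ_j j·m_j = n`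
(indices `j` running over `1, …, k`). -/
def Omega (k n : ℕ) : Finset (Fin k → ℕ) :=
  (Fintype.piFinset fun _ => Finset.range (n + 1)).filter fun m => ∑ j, (j.val + 1) * m j = n

/-- State probability of the generalized counting process with jump rates `Λ`. -/
noncomputable def gcpProb (k : ℕ) (Λ : Fin k → ℝ) (n : ℕ) (x : ℝ) : ℝ :=
  ∑ m ∈ Omega k n, ∏ j, ((Λ j * x) ^ (m j) / ((m j).factorial : ℝ) * Real.exp (-(Λ j * x)))

/-- State probabilities of the multivariate GCP time-changed by the multivariate gamma
subordinator. -/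
noncomputable def phat (q : ℕ) (lam θ : ℝ) (a : Fin q → ℝ) (k : Fin q → ℕ)
    (Λ : (i : Fin q) → Fin (k i) → ℝ) (nb : Fin q → ℕ) (t : ℝ) : ℝ :=
  ∫ x in Set.univ.pi fun _ : Fin q => Set.Ioi (0 : ℝ),
    (∏ i, gcpProb (k i) (Λ i) (nb i) (x i)) * mvGammaPdf q lam θ a x t

/-- Rising factorial (Pochhammer symbol) `(x)_h = x (x+1) ⋯ (x+h-1)`. -/
noncomputable def risingFactorial (x : ℝ) (h : ℕ) : ℝ :=
  ∏ i ∈ Finset.range h, (x + i)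

/-!
Expanding the gamma subordinator density as a series of products of one-dimensional gamma
kernels `(a x)^s / x · e^{-a x}`, the integral becomes a series of products of one-dimensional
integrals. Each GCP state probability is a finite sum of products of Poisson weights, so every
coordinate integral is a gamma integral
`∫ x^(s+η-1) e^{-(a+λ_i) x} dx = Γ(s+η) / (a+λ_i)^(s+η)`, and `Γ(s+η) = Γ(s) (s)_η`.
Since `p_i ≤ 1`, the `n`-th term is at most `Γ(λt) θ^n (λt)_n / n!`, a term of the binomial
series of `(1-θ)^(-λt)`; this summability justifies exchanging sum and integral.
-/

open Real Set Finset
open scoped Nat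

theorem risingFactorial_nonneg {x : ℝ} (hx : 0 ≤ x) (n : ℕ) : 0 ≤ risingFactorial x n :=
  prod_nonneg fun _ _ => by positivity

theorem risingFactorial_le_risingFactorial {x y : ℝ} (hx : 0 ≤ x) (hxy : x ≤ y) (n : ℕ) :
    risingFactorial x n ≤ risingFactorial y n :=
  prod_le_prod (fun _ _ => by positivity) fun _ _ => by linarith

theorem risingFactorial_natCast_add_one (k n : ℕ) :
    risingFactorial (k + 1) n = n ! * (k + n).choose n := by
  have h := Nat.ascFactorial_eq_factorial_mul_choose k n
  rw [Nat.ascFactorial_eq_prod_range] at h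
  rw [risingFactorial]
  exact_mod_cast h

theorem Real.Gamma_add_natCast_eq_mul_risingFactorial {x : ℝ} (hx : 0 < x) (n : ℕ) :
    Gamma (x + n) = Gamma x * risingFactorial x n := by
  induction n with
  | zero => simp [risingFactorial]
  | succ n ih =>
    rw [risingFactorial, prod_range_succ, ← risingFactorial, ← mul_assoc, ← ih, Nat.cast_succ,
      ← add_assoc, Gamma_add_one (by positivity)]
    ring

theorem summable_pow_div_factorial_mul_risingFactorial {θ T : ℝ} (hθ0 : 0 ≤ θ) (hθ1 : θ < 1)
    (hT : 0 ≤ T) : Summable fun n : ℕ => θ ^ n / n ! * risingFactorial T n := by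
  obtain ⟨K, hK⟩ := exists_nat_ge T
  have hθ : ‖θ‖ < 1 := by rwa [Real.norm_of_nonneg hθ0]
  refine (summable_choose_mul_geometric_of_norm_lt_one K hθ).of_nonneg_of_le
    (fun n => by have := risingFactorial_nonneg hT n; positivity) fun n => ?_
  calc θ ^ n / n ! * risingFactorial T n ≤ θ ^ n / n ! * risingFactorial (K + 1) n := by
        gcongr
        exact risingFactorial_le_risingFactorial hT (by linarith) n
    _ = (n + K).choose K * θ ^ n := by
        rw [risingFactorial_natCast_add_one, add_comm K, Nat.choose_symm_add]
        field_simp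

theorem gcpProb_nonneg {k : ℕ} {Λ : Fin k → ℝ} (hΛ : ∀ j, 0 ≤ Λ j) (n : ℕ) {x : ℝ}
    (hx : 0 ≤ x) : 0 ≤ gcpProb k Λ n x :=
  sum_nonneg fun _ _ => prod_nonneg fun j _ => by have := hΛ j; positivity

theorem sum_range_poisson_le_one {μ : ℝ} (hμ : 0 ≤ μ) (N : ℕ) :
    ∑ i ∈ range N, μ ^ i / (i ! : ℝ) * exp (-μ) ≤ 1 :=
  calc ∑ i ∈ range N, μ ^ i / (i ! : ℝ) * exp (-μ)
      = (∑ i ∈ range N, μ ^ i / (i ! : ℝ)) * exp (-μ) := (sum_mul ..).symm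
    _ ≤ exp μ * exp (-μ) := by gcongr; exact sum_le_exp_of_nonneg hμ N
    _ = 1 := by rw [← exp_add, add_neg_cancel, exp_zero]

theorem gcpProb_le_one {k : ℕ} {Λ : Fin k → ℝ} (hΛ : ∀ j, 0 ≤ Λ j) (n : ℕ) {x : ℝ}
    (hx : 0 ≤ x) : gcpProb k Λ n x ≤ 1 := by
  set f : Fin k → ℕ → ℝ := fun j i => (Λ j * x) ^ i / (i ! : ℝ) * exp (-(Λ j * x))
  have hf : ∀ j i, 0 ≤ f j i := fun j i => by have := hΛ j; positivity
  calc gcpProb k Λ n x ≤ ∑ m ∈ Fintype.piFinset fun _ => range (n + 1), ∏ j, f j (m j) :=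
        sum_le_sum_of_subset_of_nonneg (filter_subset _ _) fun _ _ _ =>
          prod_nonneg fun j _ => hf _ _
    _ = ∏ j, ∑ i ∈ range (n + 1), f j i := (prod_univ_sum _ _).symm
    _ ≤ ∏ _j : Fin k, (1 : ℝ) :=
        prod_le_prod (fun j _ => sum_nonneg fun i _ => hf j i) fun j _ =>
          sum_range_poisson_le_one (mul_nonneg (hΛ j) hx) _
    _ = 1 := prod_const_one

/-- `gammaKernel a s / Γ s` is the gamma density with shape `s` and rate `a`. -/
noncomputable def gammaKernel (a s x : ℝ) : ℝ :=
  (a * x) ^ s / x * exp (-(a * x))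

theorem gammaKernel_eq {a s x : ℝ} (ha : 0 ≤ a) (hx : 0 < x) :
    gammaKernel a s x = a ^ s * (x ^ (s - 1) * exp (-(a * x))) := by
  rw [gammaKernel, mul_rpow ha hx.le, rpow_sub_one hx.ne']
  ring

theorem gammaKernel_nonneg {a s x : ℝ} (ha : 0 ≤ a) (hx : 0 ≤ x) : 0 ≤ gammaKernel a s x := by
  unfold gammaKernel; positivity

theorem integrableOn_rpow_sub_one_mul_exp_neg_mul {s b : ℝ} (hs : 0 < s) (hb : 0 < b) :
    IntegrableOn (fun x : ℝ => x ^ (s - 1) * exp (-(b * x))) (Ioi 0) := by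
  simpa [neg_mul] using integrableOn_rpow_mul_exp_neg_mul_rpow (p := 1) (by linarith) one_pos hb

theorem integrableOn_gammaKernel {a s : ℝ} (ha : 0 < a) (hs : 0 < s) :
    IntegrableOn (gammaKernel a s) (Ioi 0) :=
  IntegrableOn.congr_fun ((integrableOn_rpow_sub_one_mul_exp_neg_mul hs ha).const_mul (a ^ s))
    (fun _ hx => (gammaKernel_eq ha.le hx).symm) measurableSet_Ioi

theorem integral_gammaKernel {a s : ℝ} (ha : 0 < a) (hs : 0 < s) :
    ∫ x in Ioi 0, gammaKernel a s x = Gamma s := by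
  rw [setIntegral_congr_fun measurableSet_Ioi fun x hx => gammaKernel_eq ha.le hx,
    integral_const_mul, integral_rpow_mul_exp_neg_mul_Ioi hs ha, ← mul_assoc,
    ← mul_rpow ha.le (by positivity), mul_one_div_cancel ha.ne', one_rpow, one_mul]

noncomputable def gcpGammaMixProb (k : ℕ) (Λ : Fin k → ℝ) (a s : ℝ) (n : ℕ) : ℝ :=
  (a / (a + ∑ j, Λ j)) ^ s * ∑ m ∈ Omega k n, risingFactorial s (∑ j, m j) *
    ∏ j, ((Λ j / (a + ∑ j', Λ j')) ^ (m j) / ((m j)! : ℝ))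

section PoissonGamma

variable {k : ℕ} {Λ : Fin k → ℝ} {a s : ℝ}

theorem prod_poisson_mul_gammaKernel (ha : 0 ≤ a) (m : Fin k → ℕ) {x : ℝ} (hx : 0 < x) :
    (∏ j, ((Λ j * x) ^ (m j) / ((m j)! : ℝ) * exp (-(Λ j * x)))) * gammaKernel a s x
      = a ^ s * (∏ j, Λ j ^ (m j) / ((m j)! : ℝ)) *
          (x ^ (s + (∑ j, m j : ℕ) - 1) * exp (-((a + ∑ j, Λ j) * x))) := by
  have hpow : x ^ (s + (∑ j, m j : ℕ) - 1) = x ^ (∑ j, m j) * x ^ (s - 1) := by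
    rw [add_sub_right_comm, rpow_add hx, rpow_natCast, mul_comm]
  rw [gammaKernel_eq ha hx, hpow, prod_mul_distrib, ← exp_sum, ← prod_pow_eq_pow_sum]
  have hexp : -((a + ∑ j, Λ j) * x) = ∑ j, -(Λ j * x) + -(a * x) := by
    rw [sum_neg_distrib, ← sum_mul]; ring
  have hprod : ∏ j, (Λ j * x) ^ (m j) / ((m j)! : ℝ)
      = (∏ j, Λ j ^ (m j) / ((m j)! : ℝ)) * ∏ j, x ^ (m j) := by
    rw [← prod_mul_distrib]
    exact prod_congr rfl fun j _ => by rw [mul_pow]; ring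
  rw [hexp, exp_add, hprod]
  ring

theorem integrableOn_prod_poisson_mul_gammaKernel (hΛ : ∀ j, 0 ≤ Λ j) (ha : 0 < a) (hs : 0 < s)
    (m : Fin k → ℕ) :
    IntegrableOn (fun x => (∏ j, ((Λ j * x) ^ (m j) / ((m j)! : ℝ) * exp (-(Λ j * x)))) *
      gammaKernel a s x) (Ioi 0) := by
  have hb : 0 < a + ∑ j, Λ j := add_pos_of_pos_of_nonneg ha (sum_nonneg fun j _ => hΛ j)
  have hsη : 0 < s + (∑ j, m j : ℕ) := by positivity
  exact IntegrableOn.congr_fun ((integrableOn_rpow_sub_one_mul_exp_neg_mul hsη hb).const_mul _)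
    (fun x hx => (prod_poisson_mul_gammaKernel ha.le m hx).symm) measurableSet_Ioi

theorem integral_prod_poisson_mul_gammaKernel (hΛ : ∀ j, 0 ≤ Λ j) (ha : 0 < a) (hs : 0 < s)
    (m : Fin k → ℕ) :
    ∫ x in Ioi 0, (∏ j, ((Λ j * x) ^ (m j) / ((m j)! : ℝ) * exp (-(Λ j * x)))) *
      gammaKernel a s x
      = Gamma s * ((a / (a + ∑ j, Λ j)) ^ s * (risingFactorial s (∑ j, m j) *
          ∏ j, ((Λ j / (a + ∑ j', Λ j')) ^ (m j) / ((m j)! : ℝ)))) := by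
  set b := a + ∑ j, Λ j
  have hb : 0 < b := add_pos_of_pos_of_nonneg ha (sum_nonneg fun j _ => hΛ j)
  have hsη : 0 < s + (∑ j, m j : ℕ) := by positivity
  have hpow : (a / b) ^ s = a ^ s * (1 / b) ^ s := by
    rw [div_eq_mul_one_div, mul_rpow ha.le (by positivity)]
  have hprod : ∏ j, ((Λ j / b) ^ (m j) / ((m j)! : ℝ))
      = (∏ j, Λ j ^ (m j) / ((m j)! : ℝ)) * (1 / b) ^ (∑ j, m j) := by
    rw [← prod_pow_eq_pow_sum, ← prod_mul_distrib]
    exact prod_congr rfl fun j _ => by rw [div_mul_eq_mul_div, ← mul_pow, mul_one_div]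
  rw [setIntegral_congr_fun measurableSet_Ioi fun x hx => prod_poisson_mul_gammaKernel ha.le m hx,
    integral_const_mul, integral_rpow_mul_exp_neg_mul_Ioi hsη hb,
    Gamma_add_natCast_eq_mul_risingFactorial hs, rpow_add (by positivity), rpow_natCast, hpow,
    hprod]
  ring

theorem integrableOn_gcpProb_mul_gammaKernel (hΛ : ∀ j, 0 ≤ Λ j) (ha : 0 < a) (hs : 0 < s)
    (n : ℕ) :
    IntegrableOn (fun x => gcpProb k Λ n x * gammaKernel a s x) (Ioi 0) := by
  simp only [gcpProb, sum_mul]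
  exact integrable_finsetSum _ fun m _ => integrableOn_prod_poisson_mul_gammaKernel hΛ ha hs m

theorem integral_gcpProb_mul_gammaKernel (hΛ : ∀ j, 0 ≤ Λ j) (ha : 0 < a) (hs : 0 < s)
    (n : ℕ) :
    ∫ x in Ioi 0, gcpProb k Λ n x * gammaKernel a s x = Gamma s * gcpGammaMixProb k Λ a s n := by
  simp only [gcpProb, sum_mul]
  rw [integral_finsetSum _ fun m _ => integrableOn_prod_poisson_mul_gammaKernel hΛ ha hs m,
    gcpGammaMixProb, mul_sum, mul_sum]
  exact sum_congr rfl fun m _ => integral_prod_poisson_mul_gammaKernel hΛ ha hs m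

theorem integral_gcpProb_mul_gammaKernel_le_Gamma (hΛ : ∀ j, 0 ≤ Λ j) (ha : 0 < a)
    (hs : 0 < s) (n : ℕ) :
    ∫ x in Ioi 0, gcpProb k Λ n x * gammaKernel a s x ≤ Gamma s := by
  rw [← integral_gammaKernel ha hs]
  refine setIntegral_mono_on (integrableOn_gcpProb_mul_gammaKernel hΛ ha hs n)
    (integrableOn_gammaKernel ha hs) measurableSet_Ioi fun x hx => ?_
  exact mul_le_of_le_one_left (gammaKernel_nonneg ha.le (le_of_lt hx))
    (gcpProb_le_one hΛ n (le_of_lt hx))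

end PoissonGamma

section Pi

variable {ι E : Type*} [Fintype ι] [MeasureSpace E] [SigmaFinite (volume : Measure E)]
  {s : ι → Set E}

theorem integrableOn_univ_pi_prod {f : ι → E → ℝ} (hf : ∀ i, IntegrableOn (f i) (s i)) :
    IntegrableOn (fun x : ι → E => ∏ i, f i (x i)) (univ.pi s) := by
  rw [IntegrableOn, volume_pi, Measure.restrict_pi_pi]
  exact Integrable.fintype_prod hf

theorem setIntegral_univ_pi_prod (f : ι → E → ℝ) :
    ∫ x in univ.pi s, ∏ i, f i (x i) = ∏ i, ∫ x in s i, f i x := by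
  rw [volume_pi, Measure.restrict_pi_pi]
  exact integral_fintype_prod_eq_prod _

theorem setIntegral_univ_pi_tsum_mul_prod (hs : ∀ i, MeasurableSet (s i)) {c : ℕ → ℝ}
    {F : ℕ → ι → E → ℝ} (hc : ∀ n, 0 ≤ c n) (hF : ∀ n i, ∀ x ∈ s i, 0 ≤ F n i x)
    (hFint : ∀ n i, IntegrableOn (F n i) (s i))
    (hsum : Summable fun n => c n * ∏ i, ∫ x in s i, F n i x) :
    ∫ x in univ.pi s, ∑' n, c n * ∏ i, F n i (x i) = ∑' n, c n * ∏ i, ∫ x in s i, F n i x := by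
  have hint : ∀ n, IntegrableOn (fun x => c n * ∏ i, F n i (x i)) (univ.pi s) :=
    fun n => (integrableOn_univ_pi_prod (hFint n)).const_mul (c n)
  have hval : ∀ n, ∫ x in univ.pi s, c n * ∏ i, F n i (x i) = c n * ∏ i, ∫ x in s i, F n i x :=
    fun n => by rw [integral_const_mul, setIntegral_univ_pi_prod]
  have hnorm : ∀ n, ∫ x in univ.pi s, ‖c n * ∏ i, F n i (x i)‖
      = c n * ∏ i, ∫ x in s i, F n i x := fun n => by
    rw [← hval n]
    refine setIntegral_congr_fun (MeasurableSet.univ_pi hs) fun x hx => ?_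
    exact Real.norm_of_nonneg <| mul_nonneg (hc n) <|
      prod_nonneg fun i _ => hF n i (x i) (hx i (mem_univ i))
  rw [← integral_tsum_of_summable_integral_norm hint (by simpa only [hnorm] using hsum)]
  exact tsum_congr hval

end Pi

noncomputable def mvGammaCoeff (q : ℕ) (T θ : ℝ) (n : ℕ) : ℝ :=
  θ ^ n / (n ! * Gamma (n + T) ^ (q - 1))

theorem mvGammaCoeff_nonneg (q : ℕ) {T θ : ℝ} (hT : 0 < T) (hθ : 0 ≤ θ) (n : ℕ) :
    0 ≤ mvGammaCoeff q T θ n := by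
  have := Gamma_pos_of_pos (show 0 < n + T by positivity)
  unfold mvGammaCoeff; positivity

theorem mvGammaCoeff_mul_Gamma_pow {q : ℕ} (hq : 1 ≤ q) {T : ℝ} (hT : 0 < T) (θ : ℝ) (n : ℕ) :
    mvGammaCoeff q T θ n * Gamma (n + T) ^ q = Gamma T * (θ ^ n / n ! * risingFactorial T n) := by
  obtain ⟨p, rfl⟩ := Nat.exists_eq_add_of_le' hq
  have hΓ : Gamma (n + T) ≠ 0 := (Gamma_pos_of_pos (by positivity)).ne'
  rw [add_comm (n : ℝ), Gamma_add_natCast_eq_mul_risingFactorial hT] at hΓ ⊢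
  rw [mvGammaCoeff, Nat.add_sub_cancel, pow_succ, add_comm (n : ℝ),
    Gamma_add_natCast_eq_mul_risingFactorial hT]
  field_simp

theorem summable_mvGammaCoeff_mul_prod {q : ℕ} (hq : 1 ≤ q) {T θ : ℝ} (hT : 0 < T)
    (hθ0 : 0 ≤ θ) (hθ1 : θ < 1) {G : ℕ → Fin q → ℝ} (hG0 : ∀ n i, 0 ≤ G n i)
    (hG : ∀ n i, G n i ≤ Gamma (n + T)) :
    Summable fun n => mvGammaCoeff q T θ n * ∏ i, G n i := by
  refine .of_nonneg_of_le (fun n => ?_) (fun n => ?_)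
    ((summable_pow_div_factorial_mul_risingFactorial hθ0 hθ1 hT.le).mul_left (Gamma T))
  · exact mul_nonneg (mvGammaCoeff_nonneg q hT hθ0 n) (prod_nonneg fun i _ => hG0 n i)
  · rw [← mvGammaCoeff_mul_Gamma_pow hq hT, ← Fin.prod_const q (Gamma (n + T))]
    exact mul_le_mul_of_nonneg_left (prod_le_prod (fun i _ => hG0 n i) fun i _ => hG n i)
      (mvGammaCoeff_nonneg q hT hθ0 n)

theorem prod_gcpProb_mul_mvGammaPdf (q : ℕ) (lam θ : ℝ) (a : Fin q → ℝ) (k : Fin q → ℕ)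
    (Λ : (i : Fin q) → Fin (k i) → ℝ) (nb : Fin q → ℕ) (t : ℝ) (x : Fin q → ℝ) :
    (∏ i, gcpProb (k i) (Λ i) (nb i) (x i)) * mvGammaPdf q lam θ a x t
      = (1 - θ) ^ (lam * t) / Gamma (lam * t) * ∑' n : ℕ, mvGammaCoeff q (lam * t) θ n *
          ∏ i, gcpProb (k i) (Λ i) (nb i) (x i) * gammaKernel (a i) (n + lam * t) (x i) := by
  rw [mvGammaPdf, mul_left_comm, ← tsum_mul_left]
  congr 1
  refine tsum_congr fun n => ?_
  rw [mul_left_comm, ← prod_mul_distrib]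
  rfl

theorem setIntegral_tsum_mvGammaCoeff_mul_prod_gcpProb {q : ℕ} (hq : 1 ≤ q) {T θ : ℝ}
    (hT : 0 < T) (hθ0 : 0 ≤ θ) (hθ1 : θ < 1) {a : Fin q → ℝ} (ha : ∀ i, 0 < a i)
    {k : Fin q → ℕ} {Λ : (i : Fin q) → Fin (k i) → ℝ} (hΛ : ∀ i j, 0 ≤ Λ i j)
    (nb : Fin q → ℕ) :
    ∫ x in univ.pi fun _ => Ioi 0, ∑' n : ℕ, mvGammaCoeff q T θ n *
        ∏ i, gcpProb (k i) (Λ i) (nb i) (x i) * gammaKernel (a i) (n + T) (x i)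
      = Gamma T * ∑' n : ℕ, θ ^ n / n ! * risingFactorial T n *
          ∏ i, gcpGammaMixProb (k i) (Λ i) (a i) (n + T) (nb i) := by
  have hs : ∀ n : ℕ, 0 < (n : ℝ) + T := fun n => by positivity
  have hF : ∀ (n : ℕ) i, ∀ x ∈ Ioi (0 : ℝ),
      0 ≤ gcpProb (k i) (Λ i) (nb i) x * gammaKernel (a i) (n + T) x := fun n i x hx =>
    mul_nonneg (gcpProb_nonneg (hΛ i) _ (le_of_lt hx)) (gammaKernel_nonneg (ha i).le (le_of_lt hx))
  rw [setIntegral_univ_pi_tsum_mul_prod (fun _ => measurableSet_Ioi)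
    (mvGammaCoeff_nonneg q hT hθ0) hF
    (fun n i => integrableOn_gcpProb_mul_gammaKernel (hΛ i) (ha i) (hs n) (nb i))
    (summable_mvGammaCoeff_mul_prod hq hT hθ0 hθ1
      (fun n i => setIntegral_nonneg measurableSet_Ioi (hF n i))
      fun n i => integral_gcpProb_mul_gammaKernel_le_Gamma (hΛ i) (ha i) (hs n) (nb i)),
    ← tsum_mul_left]
  refine tsum_congr fun n => ?_
  rw [prod_congr rfl fun i _ => integral_gcpProb_mul_gammaKernel (hΛ i) (ha i) (hs n) (nb i),
    prod_mul_distrib, Fin.prod_const, ← mul_assoc, mvGammaCoeff_mul_Gamma_pow hq hT]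
  ring

theorem timeChanged_mvGCP_state_probabilities_general
    (q : ℕ) (hq : 1 ≤ q) (lam θ : ℝ) (hlam : 0 < lam) (hθ0 : 0 < θ) (hθ1 : θ < 1)
    (a : Fin q → ℝ) (ha : ∀ i, 0 < a i)
    (k : Fin q → ℕ)
    (Λ : (i : Fin q) → Fin (k i) → ℝ) (hΛ : ∀ i j, 0 < Λ i j)
    (t : ℝ) (ht : 0 < t) (nb : Fin q → ℕ) :
    phat q lam θ a k Λ nb t
      = (1 - θ) ^ (lam * t) *
          ∑' h : ℕ, (θ ^ h / (h.factorial : ℝ)) * risingFactorial (lam * t) h *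
            ∏ i, ((a i / (a i + ∑ j, Λ i j)) ^ ((h : ℝ) + lam * t) *
              ∑ m ∈ Omega (k i) (nb i),
                risingFactorial ((h : ℝ) + lam * t) (∑ j, m j) *
                  ∏ j, ((Λ i j / (a i + ∑ j', Λ i j')) ^ (m j) / ((m j).factorial : ℝ))) := by
  have hT : 0 < lam * t := mul_pos hlam ht
  simp only [phat, prod_gcpProb_mul_mvGammaPdf, integral_const_mul]
  rw [setIntegral_tsum_mvGammaCoeff_mul_prod_gcpProb hq hT hθ0.le hθ1 ha
    (fun i j => (hΛ i j).le), ← mul_assoc, div_mul_cancel₀ _ (Gamma_pos_of_pos hT).ne']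
  rfl

theorem timeChanged_mvGCP_state_probabilities
    (q : ℕ) (hq : 1 ≤ q) (lam θ : ℝ) (hlam : 0 < lam) (hθ0 : 0 < θ) (hθ1 : θ < 1)
    (a : Fin q → ℝ) (ha : ∀ i, 0 < a i)
    (k : Fin q → ℕ) (hk : ∀ i, 1 ≤ k i)
    (Λ : (i : Fin q) → Fin (k i) → ℝ) (hΛ : ∀ i j, 0 < Λ i j)
    (t : ℝ) (ht : 0 < t) (nb : Fin q → ℕ) :
    phat q lam θ a k Λ nb t
      = (1 - θ) ^ (lam * t) *
          ∑' h : ℕ, (θ ^ h / (h.factorial : ℝ)) * risingFactorial (lam * t) h *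
            ∏ i, ((a i / (a i + ∑ j, Λ i j)) ^ ((h : ℝ) + lam * t) *
              ∑ m ∈ Omega (k i) (nb i),
                risingFactorial ((h : ℝ) + lam * t) (∑ j, m j) *
                  ∏ j, ((Λ i j / (a i + ∑ j', Λ i j')) ^ (m j) / ((m j).factorial : ℝ))) :=
  timeChanged_mvGCP_state_probabilities_general q hq lam θ hlam hθ0 hθ1 a ha k Λ hΛ t ht nb
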